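/- Let ρ and σ be density matrices with supp(ρ) ⊆ supp(σ). Then for any c > 0, D(ρ‖σ) ≥ (1/c)·Tr(ρ − ρ^{1−c} σ^c). -/

import Mathlib

open Matrix
open scoped ComplexOrder

variable {d : Type*} [Fintype d] [DecidableEq d]

open Classical in
/-- Functional calculus for Hermitian matrices: apply `f` to the eigenvalues.
Returns `0` if the matrix is not Hermitian. -/
noncomputable def mfun (f : ℝ → ℝ) (A : Matrix d d ℂ) : Matrix d d ℂ :=
  if hA : A.IsHermitian then
    (hA.eigenvectorUnitary : Matrix d d ℂ) *
      Matrix.diagonal (fun i => (f (hA.eigenvalues i) : ℂ)) *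
      star (hA.eigenvectorUnitary : Matrix d d ℂ)
  else 0

/-- Matrix logarithm on the support (eigenvalues `≤ 0` are mapped to `0`). -/
noncomputable def logm (A : Matrix d d ℂ) : Matrix d d ℂ :=
  mfun (fun x => if x ≤ 0 then 0 else Real.log x) A

/-- Matrix real power on the support (eigenvalues `≤ 0` are mapped to `0`). -/
noncomputable def powm (A : Matrix d d ℂ) (p : ℝ) : Matrix d d ℂ :=
  mfun (fun x => if x ≤ 0 then 0 else x ^ p) A

/-- Quantum relative entropy `D(ρ‖σ) = Tr(ρ (log ρ − log σ))` (natural log). -/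
noncomputable def qRelEnt (ρ σ : Matrix d d ℂ) : ℝ :=
  ((ρ * (logm ρ - logm σ)).trace).re

/-- The support of `ρ` is contained in the support of `σ` (kernel containment,
equivalent to range containment for Hermitian matrices). -/
def SuppSubset (ρ σ : Matrix d d ℂ) : Prop :=
  ∀ v : d → ℂ, σ.mulVec v = 0 → ρ.mulVec v = 0

/-- Trace norm of a Hermitian matrix: `Tr |A|`. -/
noncomputable def traceNorm (A : Matrix d d ℂ) : ℝ :=
  ((mfun (fun x => |x|) A).trace).re

/-!
Diagonalise `ρ = ∑ pᵢ |aᵢ⟩⟨aᵢ|` and `σ = ∑ qⱼ |bⱼ⟩⟨bⱼ|`. Every trace in the inequality is a sum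
`∑ᵢⱼ F(pᵢ, qⱼ) |⟨aᵢ, bⱼ⟩|²`, so it reduces termwise to the scalar inequality
`(p - p^(1-c) q^c) / c ≤ p (log p - log q)`, i.e. `log x ≤ x - 1` at `x = (q/p)^c`.
Terms with `qⱼ = 0` vanish because `supp ρ ⊆ supp σ` forces `pᵢ ⟨aᵢ, bⱼ⟩ = 0`.
-/

open Finset

section FunctionalCalculus

variable {A B : Matrix d d ℂ}

lemma mfun_of_isHermitian (f : ℝ → ℝ) (hA : A.IsHermitian) :
    mfun f A = (hA.eigenvectorUnitary : Matrix d d ℂ) *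
      diagonal (fun i => (f (hA.eigenvalues i) : ℂ)) *
      star (hA.eigenvectorUnitary : Matrix d d ℂ) :=
  dif_pos hA

lemma mfun_eq_cfc (f : ℝ → ℝ) (hA : A.IsHermitian) : mfun f A = cfc f A := by
  rw [hA.cfc_eq, IsHermitian.cfc, Unitary.conjStarAlgAut_apply, mfun_of_isHermitian f hA]
  rfl

lemma mfun_id (hA : A.IsHermitian) : mfun (fun x => x) A = A := by
  rw [mfun_eq_cfc _ hA, cfc_id' ℝ A]

lemma mfun_const_one (hA : A.IsHermitian) : mfun (fun _ => 1) A = 1 := by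
  rw [mfun_eq_cfc _ hA, cfc_const_one ℝ A]

lemma mfun_mul_mfun (f g : ℝ → ℝ) (hA : A.IsHermitian) :
    mfun f A * mfun g A = mfun (fun x => f x * g x) A := by
  simp only [mfun_eq_cfc _ hA]
  exact (cfc_mul f g A (A.finite_real_spectrum.continuousOn f)
    (A.finite_real_spectrum.continuousOn g)).symm

/-- `|⟨aᵢ, bⱼ⟩|²` for the eigenvector bases `(aᵢ)` of `A` and `(bⱼ)` of `B`. -/
noncomputable def eigenOverlap (hA : A.IsHermitian) (hB : B.IsHermitian) (i j : d) : ℝ :=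
  ‖(star (hA.eigenvectorUnitary : Matrix d d ℂ) * (hB.eigenvectorUnitary : Matrix d d ℂ)) i j‖ ^ 2

lemma re_trace_mfun_mul_mfun (f g : ℝ → ℝ) (hA : A.IsHermitian) (hB : B.IsHermitian) :
    ((mfun f A * mfun g B).trace).re =
      ∑ i, ∑ j, f (hA.eigenvalues i) * g (hB.eigenvalues j) * eigenOverlap hA hB i j := by
  set U := (hA.eigenvectorUnitary : Matrix d d ℂ)
  set W := star U * (hB.eigenvectorUnitary : Matrix d d ℂ)
  have hUU : star U * U = 1 := Unitary.coe_star_mul_self hA.eigenvectorUnitary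
  have hUU' : U * star U = 1 := Unitary.coe_mul_star_self hA.eigenvectorUnitary
  have hconj : mfun f A * mfun g B = U * (diagonal (fun i => (f (hA.eigenvalues i) : ℂ)) *
      (W * diagonal (fun j => (g (hB.eigenvalues j) : ℂ)) * star W)) * star U := by
    simp only [mfun_of_isHermitian _ hA, mfun_of_isHermitian _ hB, W, StarMul.star_mul, star_star,
      mul_assoc]
    rw [hUU', mul_one]
  rw [hconj, trace_mul_cycle, hUU, one_mul, trace, Complex.re_sum]
  refine sum_congr rfl fun i _ => ?_
  rw [diag_apply, diagonal_mul, mul_apply, mul_sum, Complex.re_sum]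
  refine sum_congr rfl fun j _ => ?_
  rw [mul_diagonal, star_apply, RCLike.star_def, mul_right_comm (W i j), Complex.mul_conj',
    eigenOverlap, ← Complex.ofReal_pow, ← Complex.ofReal_mul, ← Complex.ofReal_mul,
    Complex.ofReal_re]
  ring

lemma re_trace_mfun (f : ℝ → ℝ) (hA : A.IsHermitian) (hB : B.IsHermitian) :
    ((mfun f A).trace).re = ∑ i, ∑ j, f (hA.eigenvalues i) * eigenOverlap hA hB i j := by
  simpa only [mfun_const_one hB, mul_one] using re_trace_mfun_mul_mfun f (fun _ => 1) hA hB

lemma re_trace_mul_mfun (g : ℝ → ℝ) (hA : A.IsHermitian) (hB : B.IsHermitian) :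
    ((A * mfun g B).trace).re =
      ∑ i, ∑ j, hA.eigenvalues i * g (hB.eigenvalues j) * eigenOverlap hA hB i j := by
  simpa only [mfun_id hA] using re_trace_mfun_mul_mfun (fun x => x) g hA hB

lemma mul_mfun_self (f : ℝ → ℝ) (hA : A.IsHermitian) :
    A * mfun f A = mfun (fun x => x * f x) A := by
  conv_lhs => arg 1; rw [← mfun_id hA]
  exact mfun_mul_mfun _ _ hA

lemma eigenvalues_eq_zero_or_eigenOverlap_eq_zero (hA : A.IsHermitian) (hB : B.IsHermitian)
    (hAB : SuppSubset A B) {i j : d} (hj : hB.eigenvalues j = 0) :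
    hA.eigenvalues i = 0 ∨ eigenOverlap hA hB i j = 0 := by
  set a := ⇑(hA.eigenvectorBasis i)
  set b := ⇑(hB.eigenvectorBasis j)
  have hAb : A *ᵥ b = 0 := hAB b (by rw [hB.mulVec_eigenvectorBasis, hj, zero_smul])
  have hentry : (star (hA.eigenvectorUnitary : Matrix d d ℂ) *
      (hB.eigenvectorUnitary : Matrix d d ℂ)) i j = star a ⬝ᵥ b := by
    simp [mul_apply, dotProduct, a, b]
  have hmul : (hA.eigenvalues i : ℂ) * (star a ⬝ᵥ b) = 0 :=
    calc (hA.eigenvalues i : ℂ) * (star a ⬝ᵥ b) = star (A *ᵥ a) ⬝ᵥ b := by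
          rw [hA.mulVec_eigenvectorBasis, star_smul, smul_dotProduct,
            star_trivial (hA.eigenvalues i), RCLike.real_smul_eq_coe_mul]
          rfl
      _ = star a ⬝ᵥ (A *ᵥ b) := by rw [star_mulVec, hA.eq, dotProduct_mulVec]
      _ = 0 := by rw [hAb, dotProduct_zero]
  rw [eigenOverlap, hentry]
  simpa using hmul

end FunctionalCalculus

lemma one_div_mul_sub_rpow_mul_rpow_le_mul_log_sub_log {p q c : ℝ} (hp : 0 < p) (hq : 0 < q)
    (hc : 0 < c) : 1 / c * (p - p ^ (1 - c) * q ^ c) ≤ p * (Real.log p - Real.log q) := by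
  set t := q / p
  have ht : 0 < t := div_pos hq hp
  have hpow : p ^ (1 - c) * q ^ c = p * t ^ c := by
    rw [Real.div_rpow hq.le hp.le, Real.rpow_sub hp, Real.rpow_one]
    field_simp
  have hlog : Real.log p - Real.log q = -Real.log t := by
    rw [Real.log_div hq.ne' hp.ne']
    ring
  have key : c * Real.log t ≤ t ^ c - 1 := by
    simpa only [Real.log_rpow ht] using Real.log_le_sub_one_of_pos (Real.rpow_pos_of_pos ht c)
  rw [hpow, hlog, one_div_mul_eq_div, div_le_iff₀ hc]
  nlinarith

lemma ruskai_summand_le {p q m c : ℝ} (hp : 0 ≤ p) (hq : 0 ≤ q) (hm : 0 ≤ m) (hc : 0 < c)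
    (hsupp : q = 0 → p = 0 ∨ m = 0) :
    1 / c * (p * m - (if p ≤ 0 then 0 else p ^ (1 - c)) * (if q ≤ 0 then 0 else q ^ c) * m) ≤
      p * (if p ≤ 0 then 0 else Real.log p) * m - p * (if q ≤ 0 then 0 else Real.log q) * m := by
  rcases hp.eq_or_lt with rfl | hp
  · simp
  rcases hq.eq_or_lt with rfl | hq
  · obtain rfl : m = 0 := (hsupp rfl).resolve_left hp.ne'
    simp
  simp only [if_neg hp.not_ge, if_neg hq.not_ge]
  calc _ = 1 / c * (p - p ^ (1 - c) * q ^ c) * m := by ring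
    _ ≤ p * (Real.log p - Real.log q) * m :=
      mul_le_mul_of_nonneg_right (one_div_mul_sub_rpow_mul_rpow_le_mul_log_sub_log hp hq hc) hm
    _ = _ := by ring

theorem qRelEnt_ge_ruskai_lower_general (ρ σ : Matrix d d ℂ)
    (hρ : ρ.PosSemidef)
    (hσ : σ.PosSemidef)
    (hsupp : SuppSubset ρ σ) (c : ℝ) (hc : 0 < c) :
    (1 / c) * (((ρ - powm ρ (1 - c) * powm σ c).trace).re) ≤ qRelEnt ρ σ := by
  have hTr : (ρ.trace).re = ∑ i, ∑ j, hρ.1.eigenvalues i * eigenOverlap hρ.1 hσ.1 i j := by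
    simpa only [mfun_id hρ.1] using re_trace_mfun (fun x => x) hρ.1 hσ.1
  rw [qRelEnt, logm, logm, powm, powm, mul_sub, trace_sub, trace_sub, Complex.sub_re,
    Complex.sub_re, hTr, re_trace_mfun_mul_mfun _ _ hρ.1 hσ.1, mul_mfun_self _ hρ.1,
    re_trace_mfun _ hρ.1 hσ.1, re_trace_mul_mfun _ hρ.1 hσ.1]
  simp only [← sum_sub_distrib, mul_sum]
  gcongr with i _ j _
  exact ruskai_summand_le (hρ.eigenvalues_nonneg i) (hσ.eigenvalues_nonneg j) (sq_nonneg _) hc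
    (eigenvalues_eq_zero_or_eigenOverlap_eq_zero hρ.1 hσ.1 hsupp)

/-- For density matrices `ρ`, `σ` with `supp(ρ) ⊆ supp(σ)` and any `c > 0`,
`D(ρ‖σ) ≥ (1/c)·Tr(ρ − ρ^{1−c} σ^c)`. -/
theorem qRelEnt_ge_ruskai_lower (ρ σ : Matrix d d ℂ)
    (hρ : ρ.PosSemidef) (hρ1 : ρ.trace = 1)
    (hσ : σ.PosSemidef) (hσ1 : σ.trace = 1)
    (hsupp : SuppSubset ρ σ) (c : ℝ) (hc : 0 < c) :
    (1 / c) * (((ρ - powm ρ (1 - c) * powm σ c).trace).re) ≤ qRelEnt ρ σ :=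
  qRelEnt_ge_ruskai_lower_general ρ σ hρ hσ hsupp c hc
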